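/- arXiv:0711.1516 — 8 statements merged into one kernel-verified Lean document; each statement's English description precedes it below -/
import Mathlib

section
/- Let (X,d) be a metrizable space. Then X has the Hurewicz property if and only if for every metric d' on X generating the topology of X, the metric space (X,d') is σ-totally bounded. -/
/-- A topological space `X` has the Hurewicz property if for each sequence of open covers
`U n` of `X` there is a sequence `V n` such that each `V n` is a finite subset of `U n` and
every point of `X` belongs to `⋃₀ V n` for all but finitely many `n`. -/
def HurewiczProperty (X : Type*) [TopologicalSpace X] : Prop :=
  ∀ U : ℕ → Set (Set X),
    (∀ n, (∀ S ∈ U n, IsOpen S) ∧ ⋃₀ U n = Set.univ) →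
    ∃ V : ℕ → Set (Set X),
      (∀ n, (V n).Finite ∧ V n ⊆ U n) ∧
      ∀ x : X, ∀ᶠ n in Filter.atTop, x ∈ ⋃₀ V n

/-!
For the forward direction, apply the Hurewicz property to the covers by balls of radius
`1 / (n + 1)`: the points covered at every stage from `n` on form a totally bounded set.

For the converse, the Lebesgue radius `x ↦ ⨆ W ∈ U, infEDist x Wᶜ` of an open cover `U` is
positive and continuous. Adjoining the reciprocals of the Lebesgue radii of `U 0, U 1, …` to
the metric through the graph embedding into `X × (ℕ → ℝ)` gives an equivalent metric. A set
that is totally bounded for it is totally bounded for the original metric and has a positive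
Lebesgue number for every `U n`, so finitely many members of each `U n` cover it.
Diagonalising over a countable cover of `X` by such sets yields the Hurewicz selection.
-/

open Set Filter Topology Metric ENNReal
open scoped Uniformity

def IsSigmaTotallyBounded (X : Type*) [UniformSpace X] : Prop :=
  ∃ S : ℕ → Set X, (∀ n, TotallyBounded (S n)) ∧ ⋃ n, S n = univ

theorem isSigmaTotallyBounded_of_hurewiczProperty {X : Type*} [PseudoMetricSpace X]
    (h : HurewiczProperty X) : IsSigmaTotallyBounded X := by
  obtain ⟨V, hV, hVx⟩ := h (fun n => range fun x : X => ball x (1 / (n + 1))) fun n =>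
    ⟨forall_mem_range.2 fun _ => isOpen_ball,
      sUnion_eq_univ_iff.2 fun x => ⟨_, mem_range_self x, mem_ball_self (by positivity)⟩⟩
  refine ⟨fun n => ⋂ m ≥ n, ⋃₀ V m, fun n => totallyBounded_iff.2 fun ε hε => ?_, ?_⟩
  · obtain ⟨m, hm⟩ := exists_nat_one_div_lt hε
    obtain ⟨t, -, ht, hVt⟩ := exists_subset_image_finite_and (p := (· = V (max m n))).1
      ⟨_, image_univ ▸ (hV _).2, (hV _).1, rfl⟩
    refine ⟨t, ht, fun x hx => ?_⟩
    obtain ⟨_, ⟨c, hc, rfl⟩, hxc⟩ := hVt ▸ mem_iInter₂.1 hx _ (le_max_right m n)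
    exact mem_biUnion hc
      (ball_subset_ball ((Nat.one_div_le_one_div (le_max_left m n)).trans hm.le) hxc)
  · exact iUnion_eq_univ_iff.2 fun x => by
      simpa only [mem_iInter₂, eventually_atTop] using hVx x

theorem exists_finite_subsets_eventually_mem_sUnion {X : Type*} {U : ℕ → Set (Set X)}
    {S : ℕ → Set X} (hS : ⋃ k, S k = univ)
    (hU : ∀ n k, ∃ V ⊆ U n, V.Finite ∧ S k ⊆ ⋃₀ V) :
    ∃ V : ℕ → Set (Set X), (∀ n, (V n).Finite ∧ V n ⊆ U n) ∧
      ∀ x, ∀ᶠ n in atTop, x ∈ ⋃₀ V n := by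
  choose W hWU hWfin hSW using hU
  refine ⟨fun n => ⋃ k ≤ n, W n k, fun n => ⟨(finite_Iic n).biUnion fun k _ => hWfin n k,
    iUnion₂_subset fun k _ => hWU n k⟩, fun x => ?_⟩
  obtain ⟨k, hk⟩ := mem_iUnion.1 (hS ▸ mem_univ x)
  filter_upwards [eventually_ge_atTop k] with n hn
  exact sUnion_mono (subset_biUnion_of_mem (u := W n) (mem_Iic.2 hn)) (hSW n k hk)

theorem TotallyBounded.exists_finite_subcover_of_ball_subset {X : Type*} [UniformSpace X]
    {S : Set X} (hS : TotallyBounded S) {U : Set (Set X)} {d : Set (X × X)} (hd : d ∈ 𝓤 X)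
    (h : ∀ x ∈ S, ∃ W ∈ U, {y | (y, x) ∈ d} ⊆ W) : ∃ V ⊆ U, V.Finite ∧ S ⊆ ⋃₀ V := by
  obtain ⟨t, htS, ht, hSt⟩ := totallyBounded_iff_subset.1 hS d hd
  choose! W hWU hW using h
  refine ⟨W '' t, image_subset_iff.2 fun y hy => hWU y (htS hy), ht.image W, fun x hx => ?_⟩
  obtain ⟨y, hy, hxy⟩ := mem_iUnion₂.1 (hSt hx)
  exact mem_sUnion_of_mem (hW y (htS hy) hxy) (mem_image_of_mem W hy)

section LebesgueRadius

variable {X : Type*} [PseudoEMetricSpace X] {U : Set (Set X)} {x : X}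

noncomputable def lebesgueRadius (U : Set (Set X)) (x : X) : ℝ≥0∞ :=
  ⨆ W ∈ U, infEDist x Wᶜ

theorem lebesgueRadius_le_add_edist (x y : X) :
    lebesgueRadius U x ≤ lebesgueRadius U y + edist x y :=
  iSup₂_le fun W hW => infEDist_le_infEDist_add_edist.trans
    (add_le_add (le_iSup₂ (f := fun W _ => infEDist y Wᶜ) W hW) le_rfl)

theorem continuous_lebesgueRadius : Continuous (lebesgueRadius U) :=
  continuous_of_le_add_edist 1 one_ne_top fun x y => by
    simpa only [one_mul] using lebesgueRadius_le_add_edist x y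

theorem lebesgueRadius_pos (hU : ∀ W ∈ U, IsOpen W) (hx : x ∈ ⋃₀ U) :
    0 < lebesgueRadius U x := by
  obtain ⟨W, hW, hxW⟩ := hx
  refine lt_of_lt_of_le ?_ (le_iSup₂ (f := fun W _ => infEDist x Wᶜ) W hW)
  rw [infEDist_pos_iff_notMem_closure, (hU W hW).isClosed_compl.closure_eq]
  exact not_not.2 hxW

theorem exists_eball_subset_of_lt_lebesgueRadius {r : ℝ≥0∞} (h : r < lebesgueRadius U x) :
    ∃ W ∈ U, eball x r ⊆ W := by
  obtain ⟨W, hW, hr⟩ := lt_biSup_iff.1 h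
  refine ⟨W, hW, eball_subset_closedEBall.trans ?_⟩
  simpa using (disjoint_closedEBall_of_lt_infEDist hr).subset_compl_right

end LebesgueRadius

theorem ENNReal.exists_pos_forall_lt_of_bddAbove_toReal_inv {ι : Type*} {f : ι → ℝ≥0∞}
    {S : Set ι} (hf : ∀ i ∈ S, f i ≠ 0) (hS : BddAbove ((fun i => (f i)⁻¹.toReal) '' S)) :
    ∃ r > 0, ∀ i ∈ S, r < f i := by
  obtain ⟨C, hC⟩ := hS
  refine ⟨(ENNReal.ofReal C + 1)⁻¹, ENNReal.inv_pos.2 (by finiteness), fun i hi => ?_⟩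
  rw [ENNReal.inv_lt_iff_inv_lt]
  calc (f i)⁻¹ = ENNReal.ofReal (f i)⁻¹.toReal :=
        (ofReal_toReal (inv_ne_top.2 (hf i hi))).symm
    _ ≤ ENNReal.ofReal C := ofReal_le_ofReal (hC (mem_image_of_mem _ hi))
    _ < ENNReal.ofReal C + 1 := lt_add_right ofReal_ne_top one_ne_zero

theorem exists_metricSpace_uniformContinuous {X : Type*} [m₀ : MetricSpace X] {ι : Type*}
    [Encodable ι] {Y : ι → Type*} [∀ i, MetricSpace (Y i)] (g : ∀ i, X → Y i)
    (hg : ∀ i, Continuous (g i)) :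
    ∃ m : MetricSpace X,
      m.toUniformSpace.toTopologicalSpace = m₀.toUniformSpace.toTopologicalSpace ∧
      UniformContinuous[m.toUniformSpace, m₀.toUniformSpace] id ∧
      ∀ i, UniformContinuous[m.toUniformSpace, _] (g i) := by
  let _ : MetricSpace (∀ i, Y i) := PiCountable.metricSpace
  let Φ : X → X × ∀ i, Y i := fun x => (x, fun i => g i x)
  have hΦ : IsEmbedding Φ := isEmbedding_graph (continuous_pi hg)
  have hΦu : UniformContinuous[(hΦ.comapMetricSpace Φ).toUniformSpace, _] Φ :=
    uniformContinuous_comap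
  exact ⟨hΦ.comapMetricSpace Φ, rfl,
    @UniformContinuous.comp _ _ _ (hΦ.comapMetricSpace Φ).toUniformSpace _ _ Prod.fst Φ
      uniformContinuous_fst hΦu,
    fun i => @UniformContinuous.comp _ _ _ (hΦ.comapMetricSpace Φ).toUniformSpace _ _
      (fun p : X × ∀ i, Y i => p.2 i) Φ
      ((Pi.uniformContinuous_proj _ i).comp uniformContinuous_snd) hΦu⟩

theorem exists_iUnion_eq_univ_totallyBounded_image {X : Type*} [m₀ : MetricSpace X]
    (H : ∀ m : MetricSpace X,
      m.toUniformSpace.toTopologicalSpace = m₀.toUniformSpace.toTopologicalSpace →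
      @IsSigmaTotallyBounded X m.toUniformSpace)
    {ι : Type*} [Encodable ι] {Y : ι → Type*} [∀ i, MetricSpace (Y i)] (g : ∀ i, X → Y i)
    (hg : ∀ i, Continuous (g i)) :
    ∃ S : ℕ → Set X, ⋃ k, S k = univ ∧
      ∀ k, TotallyBounded (S k) ∧ ∀ i, TotallyBounded (g i '' S k) := by
  obtain ⟨m, hm, hid, hgu⟩ := exists_metricSpace_uniformContinuous g hg
  obtain ⟨S, hS, hSU⟩ := H m hm
  refine ⟨S, hSU, fun k => ⟨?_, fun i => (hS k).image (hgu i)⟩⟩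
  simpa using @TotallyBounded.image _ _ m.toUniformSpace m₀.toUniformSpace _ _ (hS k) hid

theorem hurewiczProperty_of_forall_isSigmaTotallyBounded {X : Type*} [m₀ : MetricSpace X]
    (H : ∀ m : MetricSpace X,
      m.toUniformSpace.toTopologicalSpace = m₀.toUniformSpace.toTopologicalSpace →
      @IsSigmaTotallyBounded X m.toUniformSpace) :
    HurewiczProperty X := by
  intro U hU
  have hpos : ∀ n x, lebesgueRadius (U n) x ≠ 0 := fun n x =>
    (lebesgueRadius_pos (hU n).1 ((hU n).2 ▸ mem_univ x)).ne'
  obtain ⟨S, hSU, hS⟩ := exists_iUnion_eq_univ_totallyBounded_image H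
    (fun n x => (lebesgueRadius (U n) x)⁻¹.toReal) fun n =>
      continuousOn_toReal.comp_continuous (continuous_inv.comp continuous_lebesgueRadius)
        fun x => inv_ne_top.2 (hpos n x)
  refine exists_finite_subsets_eventually_mem_sUnion hSU fun n k => ?_
  obtain ⟨r, hr, hrS⟩ := ENNReal.exists_pos_forall_lt_of_bddAbove_toReal_inv
    (fun x _ => hpos n x) ((hS k).2 n).isBounded.bddAbove
  exact (hS k).1.exists_finite_subcover_of_ball_subset (edist_mem_uniformity hr) fun x hx =>
    exists_eball_subset_of_lt_lebesgueRadius (hrS x hx)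

/-- A metrizable space has the Hurewicz property if and only if it is σ-totally bounded in
every metric generating its topology. -/
theorem hurewicz_iff_sigmaTotallyBounded_all_metrics
    {X : Type*} [t : TopologicalSpace X] [TopologicalSpace.MetrizableSpace X] :
    HurewiczProperty X ↔
      ∀ m : MetricSpace X,
        m.toPseudoMetricSpace.toUniformSpace.toTopologicalSpace = t →
        ∃ S : ℕ → Set X,
          (∀ n, @TotallyBounded X m.toPseudoMetricSpace.toUniformSpace (S n)) ∧
          (⋃ n, S n) = Set.univ := by
  obtain ⟨m₀, rfl⟩ : ∃ m : MetricSpace X, m.toUniformSpace.toTopologicalSpace = t :=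
    ⟨TopologicalSpace.metrizableSpaceMetric X, rfl⟩
  refine ⟨fun h m hm => ?_, hurewiczProperty_of_forall_isSigmaTotallyBounded⟩
  rw [← hm] at h
  exact @isSigmaTotallyBounded_of_hurewiczProperty X m.toPseudoMetricSpace h
end

section
/- If a metric space (X,d) has the Hurewicz property, then (X,d) is σ-totally bounded; in fact X is a countable increasing union of subsets each of which is totally bounded with respect to d. -/
/-!
The balls of radius `1 / (k + 1)` form an open cover of `X` for each `k`. The Hurewicz property
selects finitely many of them at every stage `k` so that each point lies in the selected balls
from some stage `n` on. The points that do so from stage `n` on form an increasing sequence of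
sets exhausting `X`, and the `n`-th of them is covered, for every `k ≥ n`, by finitely many balls
of radius `1 / (k + 1)`, hence is totally bounded.
-/

open Set Filter Metric Topology

theorem HurewiczProperty.exists_monotone_eventually_finite_subcover {X : Type*}
    [TopologicalSpace X] (h : HurewiczProperty X) {U : ℕ → Set (Set X)}
    (hU : ∀ n, (∀ S ∈ U n, IsOpen S) ∧ ⋃₀ U n = univ) :
    ∃ S : ℕ → Set X, Monotone S ∧ (⋃ n, S n) = univ ∧
      ∀ n, ∀ᶠ k in atTop, ∃ V ⊆ U k, V.Finite ∧ S n ⊆ ⋃₀ V := by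
  obtain ⟨V, hV, hVx⟩ := h U hU
  let S n := {x | ∀ k ≥ n, x ∈ ⋃₀ V k}
  have hS_mono : Monotone S := fun n n' hnn' x hx k hk => hx k (hnn'.trans hk)
  have hS_cover : (⋃ n, S n) = univ :=
    eq_univ_of_forall fun x => mem_iUnion.2 (eventually_atTop.1 (hVx x))
  refine ⟨S, hS_mono, hS_cover, fun n => eventually_atTop.2 ⟨n, fun k hk => ?_⟩⟩
  exact ⟨V k, (hV k).2, (hV k).1, fun x hx => hx k hk⟩

section PseudoMetric

variable {X : Type*} [PseudoMetricSpace X]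

theorem Metric.isOpenCover_image_ball {r : ℝ} (hr : 0 < r) :
    (∀ S ∈ (fun c : X => ball c r) '' univ, IsOpen S) ∧
      ⋃₀ ((fun c : X => ball c r) '' univ) = univ := by
  refine ⟨?_, eq_univ_of_forall fun x =>
    ⟨ball x r, mem_image_of_mem _ (mem_univ x), mem_ball_self hr⟩⟩
  rintro _ ⟨c, -, rfl⟩
  exact isOpen_ball

theorem Metric.totallyBounded_of_frequently_finite_ball_cover {s : Set X} {r : ℕ → ℝ}
    (hr : Tendsto r atTop (𝓝 0))
    (hs : ∃ᶠ k in atTop, ∃ t : Set X, t.Finite ∧ s ⊆ ⋃ c ∈ t, ball c (r k)) :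
    TotallyBounded s := by
  refine totallyBounded_iff.2 fun ε hε => ?_
  obtain ⟨k, hrk, t, ht, hst⟩ := ((hr.eventually (gt_mem_nhds hε)).and_frequently hs).exists
  exact ⟨t, ht, hst.trans (iUnion₂_mono fun c _ => ball_subset_ball hrk.le)⟩

end PseudoMetric

/-- If a metric space has the Hurewicz property, then it is a countable increasing union of
totally bounded subsets; in particular it is σ-totally bounded. -/
theorem sigmaTotallyBounded_of_hurewicz {X : Type*} [MetricSpace X]
    (h : HurewiczProperty X) :
    ∃ S : ℕ → Set X, Monotone S ∧ (∀ n, TotallyBounded (S n)) ∧ (⋃ n, S n) = Set.univ := by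
  obtain ⟨S, hS, hcover, hsub⟩ := h.exists_monotone_eventually_finite_subcover
    fun k => isOpenCover_image_ball (X := X) (Nat.one_div_pos_of_nat (n := k))
  refine ⟨S, hS, fun n => ?_, hcover⟩
  refine totallyBounded_of_frequently_finite_ball_cover tendsto_one_div_add_atTop_nhds_zero_nat
    ((hsub n).mono fun k hk => ?_).frequently
  obtain ⟨t, -, ht, hSt⟩ := exists_subset_image_finite_and.1 hk
  exact ⟨t, ht, by rwa [sUnion_image] at hSt⟩
end

section
/- Let X be a metrizable space. If X has property S_c(O_fin,O) and the Hurewicz property, then X has property S_c^+(O_fin,O). -/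
/-- Property `S_c(O_fin,O)`: for each sequence of finite open covers `U n` of `X` there is a
sequence `V n` of pairwise disjoint families of open sets, `V n` refining `U n`, whose union
is a cover of `X`. -/
def ScOFinO (X : Type*) [TopologicalSpace X] : Prop :=
  ∀ U : ℕ → Set (Set X),
    (∀ n, (U n).Finite ∧ (∀ S ∈ U n, IsOpen S) ∧ ⋃₀ U n = Set.univ) →
    ∃ V : ℕ → Set (Set X),
      (∀ n, (∀ S ∈ V n, IsOpen S) ∧ (V n).Pairwise Disjoint ∧
        ∀ S ∈ V n, ∃ T ∈ U n, S ⊆ T) ∧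
      ⋃₀ (⋃ n, V n) = Set.univ

/-- Property `S_c^+(O_fin,O)`: for each sequence of finite open covers `U n` of `X` there are
a sequence `W n` of finite pairwise disjoint families of open sets with `W n` refining `U n`,
and a strictly increasing sequence `m` of positive integers, such that for each `x ∈ X`, for
all but finitely many `k` there is `j` with `m k ≤ j < m (k+1)` and `x ∈ ⋃₀ W j`. -/
def ScPlusOFinO (X : Type*) [TopologicalSpace X] : Prop :=
  ∀ U : ℕ → Set (Set X),
    (∀ n, (U n).Finite ∧ (∀ S ∈ U n, IsOpen S) ∧ ⋃₀ U n = Set.univ) →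
    ∃ (W : ℕ → Set (Set X)) (m : ℕ → ℕ),
      StrictMono m ∧ 0 < m 0 ∧
      (∀ n, (W n).Finite ∧ (∀ S ∈ W n, IsOpen S) ∧ (W n).Pairwise Disjoint ∧
        ∀ S ∈ W n, ∃ T ∈ U n, S ⊆ T) ∧
      ∀ x : X, ∀ᶠ k in Filter.atTop, ∃ j, m k ≤ j ∧ j < m (k + 1) ∧ x ∈ ⋃₀ W j

/-!
Split `ℕ` into the infinitely many infinite sets `{Nat.pair k i | i ∈ ℕ}`. Applying
`S_c(O_fin,O)` along the `k`-th of them gives disjoint refinements `V k i` of `U (Nat.pair k i)`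
whose union over `i` is an open cover; the Hurewicz property then picks from the `k`-th cover a
finite subfamily, lying in `V k i` for `i < N k`, that contains each point for all large `k`.
Since `k ≤ Nat.pair k i`, block ends with `Nat.pair (m t) (N (m t)) ≤ m (t + 1)` put the sets
selected for `k = m t` into the block `[m t, m (t + 1))`, so every point is covered in almost
every block.
-/

open Filter Set

theorem Set.Finite.exists_subset_biUnion_lt {α : Type*} {s : Set α} (hs : s.Finite)
    {t : ℕ → Set α} (h : s ⊆ ⋃ i, t i) : ∃ N, s ⊆ ⋃ i < N, t i := by
  obtain ⟨I, hI, hsI⟩ := finite_subset_iUnion hs h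
  obtain ⟨N, hN⟩ := hI.bddAbove
  exact ⟨N + 1, hsI.trans <| biUnion_mono (fun i hi => Nat.lt_succ_of_le (hN hi)) fun _ _ => le_rfl⟩

theorem exists_strictMono_le_succ (B : ℕ → ℕ) :
    ∃ m : ℕ → ℕ, StrictMono m ∧ 0 < m 0 ∧ ∀ t, B (m t) ≤ m (t + 1) := by
  let m : ℕ → ℕ := fun t => Nat.rec 1 (fun _ mt => max (B mt) (mt + 1)) t
  refine ⟨m, strictMono_nat_of_lt_succ fun t => ?_, Nat.one_pos, fun t => le_max_left _ _⟩
  exact Nat.lt_of_succ_le (le_max_right (B (m t)) (m t + 1))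

theorem HurewiczProperty.exists_finite_subfamilies {X : Type*} [TopologicalSpace X]
    (hH : HurewiczProperty X) (V : ℕ → ℕ → Set (Set X)) (hV : ∀ k i, ∀ S ∈ V k i, IsOpen S)
    (hcov : ∀ k, ⋃₀ ⋃ i, V k i = univ) :
    ∃ (G : ℕ → ℕ → Set (Set X)) (N : ℕ → ℕ), (∀ k i, (G k i).Finite ∧ G k i ⊆ V k i) ∧
      ∀ x, ∀ᶠ k in atTop, ∃ i < N k, x ∈ ⋃₀ G k i := by
  obtain ⟨F, hF, hFx⟩ := hH (fun k => ⋃ i, V k i) fun k =>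
    ⟨fun S hS => (mem_iUnion.mp hS).elim fun i hi => hV k i S hi, hcov k⟩
  choose N hN using fun k => (hF k).1.exists_subset_biUnion_lt (hF k).2
  refine ⟨fun k i => F k ∩ V k i, N, fun k i => ⟨(hF k).1.inter_of_left _, inter_subset_right⟩,
    fun x => ?_⟩
  filter_upwards [hFx x] with k ⟨S, hSF, hxS⟩
  obtain ⟨i, hi, hSi⟩ := mem_iUnion₂.mp (hN k hSF)
  exact ⟨i, hi, S, ⟨hSF, hSi⟩, hxS⟩

theorem scPlusOFinO_of_scOFinO_of_hurewicz_general
    {X : Type*} [TopologicalSpace X]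
    (hsc : ScOFinO X) (hH : HurewiczProperty X) :
    ScPlusOFinO X := by
  intro U hU
  choose V hV hVcov using fun k => hsc (fun i => U (Nat.pair k i)) fun i => hU _
  obtain ⟨G, N, hG, hGx⟩ :=
    hH.exists_finite_subfamilies V (fun k i => (hV k i).1) hVcov
  obtain ⟨m, hm, hm0, hmN⟩ := exists_strictMono_le_succ fun k => Nat.pair k (N k)
  refine ⟨fun n => G n.unpair.1 n.unpair.2, m, hm, hm0, fun n => ?_, fun x => ?_⟩
  · obtain ⟨hfin, hsub⟩ := hG n.unpair.1 n.unpair.2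
    obtain ⟨hopen, hdisj, hrefine⟩ := hV n.unpair.1 n.unpair.2
    refine ⟨hfin, fun S hS => hopen S (hsub hS), hdisj.mono hsub, fun S hS => ?_⟩
    simpa only [Nat.pair_unpair] using hrefine S (hsub hS)
  · filter_upwards [hm.tendsto_atTop.eventually (hGx x)] with t ⟨i, hi, hx⟩
    refine ⟨Nat.pair (m t) i, Nat.left_le_pair _ _,
      (Nat.pair_lt_pair_right _ hi).trans_le (hmN t), ?_⟩
    simpa only [Nat.unpair_pair] using hx

/-- If a metrizable space has `S_c(O_fin,O)` and the Hurewicz property, then it has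
`S_c^+(O_fin,O)`. -/
theorem scPlusOFinO_of_scOFinO_of_hurewicz
    {X : Type*} [TopologicalSpace X] [TopologicalSpace.MetrizableSpace X]
    (hsc : ScOFinO X) (hH : HurewiczProperty X) :
    ScPlusOFinO X :=
  scPlusOFinO_of_scOFinO_of_hurewicz_general hsc hH
end

section
/- If (X,d) is a σ-totally bounded metric space which has property S_c^+(O_fin,O), then X has the Haver property with respect to the metric d. -/
/-- The Haver property of a metric space `(X,d)`: for each sequence of positive reals `ε n`
there is a sequence `V n` of pairwise disjoint families of open sets, each of `d`-diameter
less than `ε n`, whose union is a cover of `X`. -/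
def HaverProperty (X : Type*) [MetricSpace X] : Prop :=
  ∀ ε : ℕ → ℝ, (∀ n, 0 < ε n) →
    ∃ V : ℕ → Set (Set X),
      (∀ n, (∀ S ∈ V n, IsOpen S ∧ EMetric.diam S < ENNReal.ofReal (ε n)) ∧
        (V n).Pairwise Disjoint) ∧
      ⋃₀ (⋃ n, V n) = Set.univ

/-!
Exhaust `X` by closed totally bounded sets `C n`, so that every point lies in `C n` for all large
`n`. At stage `n` cover `C n` by finitely many balls of radius `ε n / 3` and add the open set
`(C n)ᶜ`. Applying `S_c^+(O_fin,O)` to these covers, every point lies in a member of the disjoint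
refinement `W j` for arbitrarily large `j`, in particular for some `j` with `x ∈ C j`; such a member
cannot lie inside `(C j)ᶜ`, so it lies in a ball and has diameter less than `ε j`.
-/

open Set Filter Metric

theorem exists_closed_totallyBounded_eventually_cover {X : Type*} [UniformSpace X]
    (h : ∃ S : ℕ → Set X, (∀ n, TotallyBounded (S n)) ∧ (⋃ n, S n) = univ) :
    ∃ C : ℕ → Set X, (∀ n, IsClosed (C n) ∧ TotallyBounded (C n)) ∧
      ∀ x, ∀ᶠ n in atTop, x ∈ C n := by
  obtain ⟨S, hS, hSU⟩ := h
  refine ⟨fun n => closure (⋃ i ∈ Iic n, S i), fun n => ⟨isClosed_closure, ?_⟩, fun x => ?_⟩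
  · exact ((totallyBounded_biUnion (finite_Iic n)).2 fun i _ => hS i).closure
  · obtain ⟨N, hxN⟩ := mem_iUnion.1 (hSU ▸ mem_univ x)
    filter_upwards [eventually_ge_atTop N] with n hn
    exact subset_closure (mem_biUnion (mem_Iic.2 hn) hxN)

theorem isOpenCover_insert_compl_image_ball {X : Type*} [PseudoMetricSpace X] {C t : Set X}
    {r : ℝ} (hC : IsClosed C) (ht : t.Finite) (hCt : C ⊆ ⋃ y ∈ t, ball y r) :
    (insert Cᶜ ((ball · r) '' t)).Finite ∧ (∀ S ∈ insert Cᶜ ((ball · r) '' t), IsOpen S) ∧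
      ⋃₀ insert Cᶜ ((ball · r) '' t) = univ := by
  refine ⟨(ht.image _).insert _, ?_, ?_⟩
  · rintro S (rfl | ⟨y, -, rfl⟩)
    exacts [hC.isOpen_compl, isOpen_ball]
  · rw [sUnion_insert, sUnion_image, ← univ_subset_iff, ← compl_union_self C]
    exact union_subset_union_right _ hCt

theorem ediam_lt_ofReal_of_subset_ball {X : Type*} [PseudoMetricSpace X] {A : Set X} {y : X}
    {r ε : ℝ} (hr : 0 ≤ r) (hA : A ⊆ ball y r) (hrε : 2 * r < ε) :
    ediam A < ENNReal.ofReal ε :=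
  calc ediam A ≤ ediam (ball y r) := ediam_mono hA
    _ ≤ 2 * ENNReal.ofReal r := by rw [← eball_ofReal]; exact ediam_eball_le
    _ = ENNReal.ofReal (2 * r) := by rw [ENNReal.ofReal_mul zero_le_two, ENNReal.ofReal_ofNat]
    _ < ENNReal.ofReal ε := (ENNReal.ofReal_lt_ofReal_iff (by linarith)).2 hrε

theorem ScPlusOFinO.exists_frequently_mem_sUnion {X : Type*} [TopologicalSpace X]
    (h : ScPlusOFinO X) {U : ℕ → Set (Set X)}
    (hU : ∀ n, (U n).Finite ∧ (∀ S ∈ U n, IsOpen S) ∧ ⋃₀ U n = univ) :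
    ∃ W : ℕ → Set (Set X),
      (∀ n, (∀ S ∈ W n, IsOpen S) ∧ (W n).Pairwise Disjoint ∧ ∀ S ∈ W n, ∃ T ∈ U n, S ⊆ T) ∧
      ∀ x, ∃ᶠ j in atTop, x ∈ ⋃₀ W j := by
  obtain ⟨W, m, hm, -, hW, hcov⟩ := h U hU
  refine ⟨W, fun n => (hW n).2, fun x => frequently_atTop.2 fun N => ?_⟩
  obtain ⟨k, ⟨j, hkj, -, hxj⟩, hNk⟩ := ((hcov x).and (eventually_ge_atTop N)).exists
  exact ⟨j, (hNk.trans hm.le_apply).trans hkj, hxj⟩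

/-- If a σ-totally bounded metric space has `S_c^+(O_fin,O)`, then it has the Haver property
with respect to its metric. -/
theorem haver_of_sigmaTotallyBounded_of_scPlus {X : Type*} [MetricSpace X]
    (htb : ∃ S : ℕ → Set X, (∀ n, TotallyBounded (S n)) ∧ (⋃ n, S n) = Set.univ)
    (hsc : ScPlusOFinO X) :
    HaverProperty X := by
  intro ε hε
  obtain ⟨C, hC, hxC⟩ := exists_closed_totallyBounded_eventually_cover htb
  have hr : ∀ n, 0 < ε n / 3 := fun n => by linarith [hε n]
  choose t ht hCt using fun n => totallyBounded_iff.1 (hC n).2 _ (hr n)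
  obtain ⟨W, hW, hfreq⟩ := hsc.exists_frequently_mem_sUnion
    fun n => isOpenCover_insert_compl_image_ball (hC n).1 (ht n) (hCt n)
  refine ⟨fun n => {A ∈ W n | ∃ y, A ⊆ ball y (ε n / 3)},
    fun n => ⟨?_, (hW n).2.1.mono (sep_subset _ _)⟩, ?_⟩
  · rintro A ⟨hAW, y, hAy⟩
    exact ⟨(hW n).1 A hAW, ediam_lt_ofReal_of_subset_ball (hr n).le hAy (by linarith [hε n])⟩
  · refine eq_univ_of_forall fun x => ?_
    obtain ⟨j, ⟨A, hAW, hxA⟩, hxCj⟩ := ((hfreq x).and_eventually (hxC x)).exists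
    obtain ⟨T, hTU, hAT⟩ := (hW j).2.2 A hAW
    rcases hTU with rfl | ⟨y, -, rfl⟩
    · exact absurd hxCj (hAT hxA)
    · exact ⟨A, mem_iUnion.2 ⟨j, hAW, y, hAT⟩, hxA⟩
end

section
/- Let X be a metrizable space with the Hurewicz property. Then X has property S_c(O,O) if and only if X has property S_c(O_fin,O). -/
/-- Property `S_c(O,O)`: for each sequence of open covers `U n` of `X` there is a sequence
`V n` of pairwise disjoint families of open sets, `V n` refining `U n`, whose union is a
cover of `X`. -/
def ScOO (X : Type*) [TopologicalSpace X] : Prop :=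
  ∀ U : ℕ → Set (Set X),
    (∀ n, (∀ S ∈ U n, IsOpen S) ∧ ⋃₀ U n = Set.univ) →
    ∃ V : ℕ → Set (Set X),
      (∀ n, (∀ S ∈ V n, IsOpen S) ∧ (V n).Pairwise Disjoint ∧
        ∀ S ∈ V n, ∃ T ∈ U n, S ⊆ T) ∧
      ⋃₀ (⋃ n, V n) = Set.univ

/-!
By regularity, the Hurewicz property applied to the covers by open sets whose closures lie in a
member of `U m` yields finite families `H m` such that each point lies in `⋃₀ H m` for almost all
`m`. Hence `X` is the union of the closed sets `K k = ⋂_{m ≥ k} closure (⋃₀ H m)`, and each `K k`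
is covered by finitely many members of `U m` for every `m ≥ k`. Adding the open set `(K k)ᶜ` turns
these into finite open covers of `X`, to which `S_c(O_fin,O)` applies; the members that refine
`(K k)ᶜ` are discarded, and the countably many runs, one for each `k`, are interleaved by
`Nat.pair`.
-/

open Set

section

variable {X : Type*} [TopologicalSpace X]

def IsDisjointOpenRefinement (V U : Set (Set X)) : Prop :=
  (∀ S ∈ V, IsOpen S) ∧ V.Pairwise Disjoint ∧ ∀ S ∈ V, ∃ T ∈ U, S ⊆ T

theorem IsDisjointOpenRefinement.mono_right {V U U' : Set (Set X)}
    (h : IsDisjointOpenRefinement V U) (hU : U ⊆ U') : IsDisjointOpenRefinement V U' :=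
  ⟨h.1, h.2.1, fun S hS => (h.2.2 S hS).imp fun _ hT => ⟨hU hT.1, hT.2⟩⟩

theorem ScOO.scOFinO (h : ScOO X) : ScOFinO X :=
  fun U hU => h U fun n => (hU n).2

def closureRefinement (U : Set (Set X)) : Set (Set X) :=
  {O | IsOpen O ∧ ∃ T ∈ U, closure O ⊆ T}

theorem sUnion_closureRefinement [RegularSpace X] {U : Set (Set X)} (hU : ∀ S ∈ U, IsOpen S) :
    ⋃₀ closureRefinement U = ⋃₀ U := by
  refine Subset.antisymm (sUnion_subset fun O ⟨_, T, hT, hOT⟩ =>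
    subset_closure.trans hOT |>.trans (subset_sUnion_of_mem hT)) ?_
  rintro x ⟨T, hT, hxT⟩
  obtain ⟨s, hs, hs_closed, hsT⟩ := exists_mem_nhds_isClosed_subset ((hU T hT).mem_nhds hxT)
  have h_closure : closure (interior s) ⊆ T :=
    (closure_minimal interior_subset hs_closed).trans hsT
  exact ⟨interior s, ⟨isOpen_interior, T, hT, h_closure⟩, mem_interior_iff_mem_nhds.2 hs⟩

theorem exists_finite_subset_closure_sUnion_subset {U H : Set (Set X)} (hH : H.Finite)
    (hHU : H ⊆ closureRefinement U) :
    ∃ F ⊆ U, F.Finite ∧ closure (⋃₀ H) ⊆ ⋃₀ F := by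
  choose! g hgU hg using fun S (hS : S ∈ H) => (hHU hS).2
  refine ⟨g '' H, image_subset_iff.2 hgU, hH.image g, ?_⟩
  rw [sUnion_eq_biUnion, hH.closure_biUnion]
  exact iUnion₂_subset fun S hS => subset_sUnion_of_subset _ (g S) (hg S hS) (mem_image_of_mem g hS)

theorem HurewiczProperty.exists_isClosed_cover [RegularSpace X] (hH : HurewiczProperty X)
    (U : ℕ → Set (Set X)) (hU : ∀ n, (∀ S ∈ U n, IsOpen S) ∧ ⋃₀ U n = univ) :
    ∃ (K : ℕ → Set X) (F : ℕ → Set (Set X)), (∀ k, IsClosed (K k)) ∧ ⋃ k, K k = univ ∧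
      (∀ m, (F m).Finite ∧ F m ⊆ U m) ∧ ∀ k m, k ≤ m → K k ⊆ ⋃₀ F m := by
  obtain ⟨H, hHfin, hH_eventually⟩ := hH (fun m => closureRefinement (U m)) fun m =>
    ⟨fun _ hO => hO.1, (sUnion_closureRefinement (hU m).1).trans (hU m).2⟩
  choose F hFU hFfin hF using fun m =>
    exists_finite_subset_closure_sUnion_subset (hHfin m).1 (hHfin m).2
  refine ⟨fun k => ⋂ m ≥ k, closure (⋃₀ H m), F,
    fun k => isClosed_biInter fun _ _ => isClosed_closure, ?_,
    fun m => ⟨hFfin m, hFU m⟩, fun k m hkm => (biInter_subset_of_mem hkm).trans (hF m)⟩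
  refine eq_univ_of_forall fun x => mem_iUnion.2 ?_
  obtain ⟨k, hk⟩ := Filter.eventually_atTop.1 (hH_eventually x)
  exact ⟨k, mem_iInter₂.2 fun m hm => subset_closure (hk m hm)⟩

theorem ScOFinO.exists_refinement_cover_of_isClosed (h : ScOFinO X) {K : Set X}
    (hK : IsClosed K) {F : ℕ → Set (Set X)} (hF : ∀ j, (F j).Finite ∧ ∀ S ∈ F j, IsOpen S)
    (hKF : ∀ j, K ⊆ ⋃₀ F j) :
    ∃ W : ℕ → Set (Set X), (∀ j, IsDisjointOpenRefinement (W j) (F j)) ∧ K ⊆ ⋃₀ ⋃ j, W j := by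
  have hC : ∀ j, (insert Kᶜ (F j)).Finite ∧ (∀ S ∈ insert Kᶜ (F j), IsOpen S) ∧
      ⋃₀ insert Kᶜ (F j) = univ := fun j =>
    ⟨(hF j).1.insert _, forall_mem_insert.2 ⟨hK.isOpen_compl, (hF j).2⟩, by
      rw [sUnion_insert, ← compl_subset_iff_union, compl_compl]; exact hKF j⟩
  obtain ⟨W, hW, hWcov⟩ := h _ hC
  refine ⟨fun j => {S ∈ W j | ∃ T ∈ F j, S ⊆ T}, fun j =>
    ⟨fun S hS => (hW j).1 S hS.1, (hW j).2.1.mono (sep_subset _ _), fun _ hS => hS.2⟩, ?_⟩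
  intro x hx
  obtain ⟨S, hS, hxS⟩ := hWcov.symm ▸ mem_univ x
  obtain ⟨j, hSj⟩ := mem_iUnion.1 hS
  obtain ⟨T, hT | hT, hST⟩ := (hW j).2.2 S hSj
  · rw [hT] at hST
    exact (hST hxS hx).elim
  · exact ⟨S, mem_iUnion.2 ⟨j, hSj, T, hT, hST⟩, hxS⟩

theorem exists_refinement_cover_of_iUnion_eq_univ {U : ℕ → Set (Set X)} {K : ℕ → Set X}
    (hK : ⋃ k, K k = univ)
    (hW : ∀ k, ∃ W : ℕ → Set (Set X), (∀ j, IsDisjointOpenRefinement (W j) (U (Nat.pair k j))) ∧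
      K k ⊆ ⋃₀ ⋃ j, W j) :
    ∃ V : ℕ → Set (Set X), (∀ n, IsDisjointOpenRefinement (V n) (U n)) ∧ ⋃₀ ⋃ n, V n = univ := by
  choose W hWU hWK using hW
  refine ⟨fun n => W n.unpair.1 n.unpair.2, fun n => by
    simpa only [Nat.pair_unpair] using hWU n.unpair.1 n.unpair.2, ?_⟩
  refine eq_univ_of_forall fun x => ?_
  obtain ⟨k, hk⟩ := mem_iUnion.1 (hK.symm ▸ mem_univ x)
  obtain ⟨S, hS, hxS⟩ := hWK k hk
  obtain ⟨j, hSj⟩ := mem_iUnion.1 hS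
  exact ⟨S, mem_iUnion.2 ⟨Nat.pair k j, by rwa [Nat.unpair_pair]⟩, hxS⟩

end

/-- In a metrizable space with the Hurewicz property, `S_c(O,O)` and `S_c(O_fin,O)` are
equivalent. -/
theorem scOO_iff_scOFinO_of_hurewicz
    {X : Type*} [TopologicalSpace X] [TopologicalSpace.MetrizableSpace X]
    (hH : HurewiczProperty X) :
    ScOO X ↔ ScOFinO X := by
  refine ⟨ScOO.scOFinO, fun hSc U hU => ?_⟩
  obtain ⟨K, F, hK_closed, hK_cover, hF, hKF⟩ := hH.exists_isClosed_cover U hU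
  refine exists_refinement_cover_of_iUnion_eq_univ hK_cover fun k => ?_
  obtain ⟨W, hW, hKW⟩ := hSc.exists_refinement_cover_of_isClosed (hK_closed k)
    (F := fun j => F (Nat.pair k j))
    (fun j => ⟨(hF _).1, fun S hS => (hU _).1 S ((hF _).2 hS)⟩)
    (fun j => hKF k _ (Nat.left_le_pair k j))
  exact ⟨W, fun j => (hW j).mono_right (hF _).2, hKW⟩
end

section
/- If a metrizable space X has the Hurewicz property and property S_c(O_fin,O), then for every metric d on X generating the topology of X, (X,d) has the Haver property with respect to d. -/
open Set Filter Metric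

def HaverPropertyOn {X : Type*} [PseudoMetricSpace X] (K : Set X) : Prop :=
  ∀ ε : ℕ → ℝ, (∀ n, 0 < ε n) →
    ∃ V : ℕ → Set (Set X),
      (∀ n, (∀ S ∈ V n, IsOpen S ∧ ediam S < ENNReal.ofReal (ε n)) ∧ (V n).Pairwise Disjoint) ∧
      K ⊆ ⋃₀ ⋃ n, V n

theorem haverProperty_of_iUnion_eq_univ {X : Type*} [MetricSpace X] {K : ℕ → Set X}
    (hcover : ⋃ k, K k = univ) (hK : ∀ k, HaverPropertyOn (K k)) : HaverProperty X := by
  intro ε hε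
  choose W hW hWK using fun k => hK k (fun j => ε (Nat.pair k j)) fun j => hε _
  refine ⟨fun n => W n.unpair.1 n.unpair.2, fun n => ?_, ?_⟩
  · have h := hW n.unpair.1 n.unpair.2
    rw [Nat.pair_unpair] at h
    exact h
  · refine eq_univ_of_forall fun x => ?_
    obtain ⟨k, hxk⟩ := mem_iUnion.mp (hcover.symm ▸ mem_univ x)
    obtain ⟨S, hS, hxS⟩ := hWK k hxk
    obtain ⟨j, hSj⟩ := mem_iUnion.mp hS
    exact ⟨S, mem_iUnion.mpr ⟨Nat.pair k j, by simpa only [Nat.unpair_pair] using hSj⟩, hxS⟩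

theorem TotallyBounded.exists_finite_cover_ediam_lt {X : Type*} [PseudoMetricSpace X]
    {K : Set X} (hK : TotallyBounded K) {δ : ℝ} (hδ : 0 < δ) :
    ∃ B : Set (Set X), B.Finite ∧ (∀ S ∈ B, IsOpen S ∧ ediam S < ENNReal.ofReal δ) ∧
      K ⊆ ⋃₀ B := by
  obtain ⟨t, ht, hKt⟩ := totallyBounded_iff.mp hK (δ / 3) (by positivity)
  refine ⟨(fun c => ball c (δ / 3)) '' t, ht.image _, ?_, by rwa [sUnion_image]⟩
  rintro _ ⟨c, -, rfl⟩
  refine ⟨isOpen_ball, ?_⟩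
  calc ediam (ball c (δ / 3)) ≤ 2 * ENNReal.ofReal (δ / 3) := by
        rw [← eball_ofReal]; exact ediam_eball_le
    _ = ENNReal.ofReal (2 * (δ / 3)) := by rw [ENNReal.ofReal_mul zero_le_two, ENNReal.ofReal_ofNat]
    _ < ENNReal.ofReal δ := (ENNReal.ofReal_lt_ofReal_iff hδ).mpr (by linarith)

theorem ScOFinO.exists_pairwiseDisjoint_refinement {X : Type*} [TopologicalSpace X]
    (hsc : ScOFinO X) {K : Set X} (hK : IsClosed K) {B : ℕ → Set (Set X)}
    (hB : ∀ j, (B j).Finite ∧ (∀ S ∈ B j, IsOpen S) ∧ K ⊆ ⋃₀ B j) :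
    ∃ W : ℕ → Set (Set X),
      (∀ j, (∀ S ∈ W j, IsOpen S) ∧ (W j).Pairwise Disjoint ∧ ∀ S ∈ W j, ∃ T ∈ B j, S ⊆ T) ∧
      K ⊆ ⋃₀ ⋃ j, W j := by
  have hcover : ∀ j, (insert Kᶜ (B j)).Finite ∧ (∀ S ∈ insert Kᶜ (B j), IsOpen S) ∧
      ⋃₀ insert Kᶜ (B j) = univ := fun j =>
    ⟨(hB j).1.insert _, forall_mem_insert.mpr ⟨hK.isOpen_compl, (hB j).2.1⟩,
      by rw [sUnion_insert, ← compl_subset_iff_union, compl_compl]; exact (hB j).2.2⟩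
  obtain ⟨D, hD, hDcover⟩ := hsc _ hcover
  refine ⟨fun j => {S ∈ D j | ∃ T ∈ B j, S ⊆ T}, fun j => ⟨fun S hS => (hD j).1 S hS.1,
    (hD j).2.1.mono (sep_subset _ _), fun S hS => hS.2⟩, fun x hx => ?_⟩
  obtain ⟨S, hS, hxS⟩ := hDcover.symm ▸ mem_univ x
  obtain ⟨j, hSj⟩ := mem_iUnion.mp hS
  obtain ⟨T, hT, hST⟩ := (hD j).2.2 S hSj
  obtain rfl | hT := mem_insert_iff.mp hT
  · exact absurd hx (hST hxS)
  · exact ⟨S, mem_iUnion.mpr ⟨j, hSj, T, hT, hST⟩, hxS⟩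

theorem ScOFinO.haverPropertyOn {X : Type*} [PseudoMetricSpace X] (hsc : ScOFinO X)
    {K : Set X} (hK : IsClosed K) (htb : TotallyBounded K) : HaverPropertyOn K := by
  intro ε hε
  choose B hBfin hBsmall hBcover using fun j => htb.exists_finite_cover_ediam_lt (hε j)
  obtain ⟨W, hW, hWcover⟩ := hsc.exists_pairwiseDisjoint_refinement hK
    fun j => ⟨hBfin j, fun S hS => (hBsmall j S hS).1, hBcover j⟩
  refine ⟨W, fun j => ⟨fun S hS => ⟨(hW j).1 S hS, ?_⟩, (hW j).2.1⟩, hWcover⟩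
  obtain ⟨T, hT, hST⟩ := (hW j).2.2 S hS
  exact (ediam_mono hST).trans_lt (hBsmall j T hT).2

theorem HurewiczProperty.exists_finite_ball_covers {X : Type*} [PseudoMetricSpace X]
    (hH : HurewiczProperty X) {r : ℕ → ℝ} (hr : ∀ n, 0 < r n) :
    ∃ F : ℕ → Set X, (∀ n, (F n).Finite) ∧ ∀ x, ∀ᶠ n in atTop, x ∈ ⋃ c ∈ F n, ball c (r n) := by
  obtain ⟨V, hV, hVcover⟩ := hH (fun n => range fun c => ball c (r n)) fun n =>
    ⟨by rintro _ ⟨c, rfl⟩; exact isOpen_ball,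
      eq_univ_of_forall fun x => ⟨ball x (r n), mem_range_self x, mem_ball_self (hr n)⟩⟩
  have hcenters : ∀ n, ∃ F : Set X, F.Finite ∧ (fun c => ball c (r n)) '' F = V n := fun n => by
    obtain ⟨F, -, hF, hFV⟩ := (hV n).1.exists_subset_finite_image_eq (s := univ)
      (by rw [image_univ]; exact (hV n).2)
    exact ⟨F, hF, hFV⟩
  choose F hF hFV using hcenters
  refine ⟨F, hF, fun x => (hVcover x).mono fun n hx => ?_⟩
  rwa [← hFV, sUnion_image] at hx

theorem HurewiczProperty.exists_isClosed_totallyBounded_cover {X : Type*} [PseudoMetricSpace X]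
    (hH : HurewiczProperty X) :
    ∃ K : ℕ → Set X, (∀ k, IsClosed (K k) ∧ TotallyBounded (K k)) ∧ ⋃ k, K k = univ := by
  set r : ℕ → ℝ := fun n => 1 / (n + 1)
  have hr : Tendsto r atTop (nhds 0) := tendsto_one_div_add_atTop_nhds_zero_nat
  obtain ⟨F, hF, hFcover⟩ := hH.exists_finite_ball_covers (r := r) fun n => by positivity
  refine ⟨fun k => ⋂ n ≥ k, ⋃ c ∈ F n, closedBall c (r n), fun k => ⟨?_, ?_⟩, ?_⟩
  · exact isClosed_biInter fun n _ => (hF n).isClosed_biUnion fun c _ => isClosed_closedBall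
  · refine totallyBounded_iff.mpr fun δ hδ => ?_
    obtain ⟨n, hkn, hrn⟩ := ((eventually_ge_atTop k).and (hr.eventually (gt_mem_nhds hδ))).exists
    refine ⟨F n, hF n, (biInter_subset_of_mem hkn).trans (iUnion₂_mono fun c _ => ?_)⟩
    exact closedBall_subset_ball hrn
  · refine eq_univ_of_forall fun x => ?_
    obtain ⟨k, hk⟩ := eventually_atTop.mp (hFcover x)
    exact mem_iUnion.mpr ⟨k, mem_iInter₂.mpr fun n hn =>
      iUnion₂_mono (fun c _ => ball_subset_closedBall) (hk n hn)⟩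

theorem haver_all_metrics_of_hurewicz_of_scOFinO_general
    {X : Type*} [t : TopologicalSpace X]
    (hH : HurewiczProperty X) (hsc : ScOFinO X) :
    ∀ m : MetricSpace X,
      m.toPseudoMetricSpace.toUniformSpace.toTopologicalSpace = t →
      @HaverProperty X m := by
  intro m hm
  subst hm
  obtain ⟨K, hK, hcover⟩ := hH.exists_isClosed_totallyBounded_cover
  exact haverProperty_of_iUnion_eq_univ hcover fun k => hsc.haverPropertyOn (hK k).1 (hK k).2

/-- If a metrizable space has the Hurewicz property and `S_c(O_fin,O)`, then it has the Haver
property with respect to every metric generating its topology. -/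
theorem haver_all_metrics_of_hurewicz_of_scOFinO
    {X : Type*} [t : TopologicalSpace X] [TopologicalSpace.MetrizableSpace X]
    (hH : HurewiczProperty X) (hsc : ScOFinO X) :
    ∀ m : MetricSpace X,
      m.toPseudoMetricSpace.toUniformSpace.toTopologicalSpace = t →
      @HaverProperty X m :=
  haver_all_metrics_of_hurewicz_of_scOFinO_general (t := t) hH hsc
end

section
/- If a topological space X has property S_c(O,O) and F ⊆ X is an F_σ subset of X, then F with the subspace topology has property S_c(O,O). -/
/-!
The argument runs through a relative form of `S_c(O,O)` for a subset `s ⊆ X`, in which both the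
covers of `s` and their disjoint refinements consist of open sets of `X`. A closed subset of an
`S_c(O,O)` space has it (add the complement of the set to each cover), it passes to countable
unions (split the sequence of covers into countably many subsequences along `Nat.pair`), and it
yields `S_c(O,O)` of the subspace (extend each member of a cover of `s` to an open set of `X` and
pull the refinements back).
-/

open Set

section

variable {X : Type*} [TopologicalSpace X]

def ScOOOn (s : Set X) : Prop :=
  ∀ U : ℕ → Set (Set X), (∀ n, (∀ S ∈ U n, IsOpen S) ∧ s ⊆ ⋃₀ U n) →
    ∃ V : ℕ → Set (Set X),
      (∀ n, (∀ S ∈ V n, IsOpen S) ∧ (V n).Pairwise Disjoint ∧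
        ∀ S ∈ V n, ∃ T ∈ U n, S ⊆ T) ∧
      s ⊆ ⋃₀ ⋃ n, V n

theorem ScOO.scOOOn_of_isClosed (hX : ScOO X) {C : Set X} (hC : IsClosed C) : ScOOOn C := by
  intro U hU
  obtain ⟨V, hV, hVcov⟩ := hX (fun n => insert Cᶜ (U n)) fun n => by
    refine ⟨?_, eq_univ_of_forall fun x => ?_⟩
    · rintro S (rfl | hS)
      exacts [hC.isOpen_compl, (hU n).1 S hS]
    · by_cases hx : x ∈ C
      · obtain ⟨S, hS, hxS⟩ := (hU n).2 hx
        exact ⟨S, mem_insert_of_mem _ hS, hxS⟩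
      · exact ⟨Cᶜ, mem_insert _ _, hx⟩
  refine ⟨fun n => {T ∈ V n | ∃ S ∈ U n, T ⊆ S}, fun n => ⟨?_, ?_, fun T hT => hT.2⟩, ?_⟩
  · exact fun T hT => (hV n).1 T hT.1
  · exact (hV n).2.1.mono fun T hT => hT.1
  · intro x hx
    obtain ⟨T, hTV, hxT⟩ : x ∈ ⋃₀ ⋃ n, V n := hVcov ▸ mem_univ x
    obtain ⟨n, hTn⟩ := mem_iUnion.mp hTV
    obtain ⟨B, hB, hTB⟩ := (hV n).2.2 T hTn
    rcases hB with rfl | hBU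
    · exact absurd hx (hTB hxT)
    · exact ⟨T, mem_iUnion.mpr ⟨n, hTn, B, hBU, hTB⟩, hxT⟩

theorem scOOOn_iUnion {C : ℕ → Set X} (hC : ∀ k, ScOOOn (C k)) : ScOOOn (⋃ k, C k) := by
  intro U hU
  have hUk : ∀ k, ∃ V : ℕ → Set (Set X),
      (∀ n, (∀ S ∈ V n, IsOpen S) ∧ (V n).Pairwise Disjoint ∧
        ∀ S ∈ V n, ∃ T ∈ U (Nat.pair k n), S ⊆ T) ∧ C k ⊆ ⋃₀ ⋃ n, V n :=
    fun k => hC k (fun n => U (Nat.pair k n)) fun n =>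
      ⟨(hU _).1, (subset_iUnion C k).trans (hU _).2⟩
  choose V hV hVcov using hUk
  refine ⟨fun m => V m.unpair.1 m.unpair.2, fun m => ?_, ?_⟩
  · simpa only [Nat.pair_unpair] using hV m.unpair.1 m.unpair.2
  · refine iUnion_subset fun k x hx => ?_
    obtain ⟨T, hTV, hxT⟩ := hVcov k hx
    obtain ⟨n, hTn⟩ := mem_iUnion.mp hTV
    exact ⟨T, mem_iUnion.mpr ⟨Nat.pair k n, by simpa only [Nat.unpair_pair] using hTn⟩, hxT⟩

theorem ScOOOn.scOO {s : Set X} (hs : ScOOOn s) : ScOO s := by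
  intro U hU
  obtain ⟨V, hV, hVcov⟩ := hs (fun n => {O | IsOpen O ∧ (↑) ⁻¹' O ∈ U n}) fun n =>
    ⟨fun O hO => hO.1, fun x hx => by
      obtain ⟨S, hS, hxS⟩ : (⟨x, hx⟩ : s) ∈ ⋃₀ U n := (hU n).2 ▸ mem_univ _
      obtain ⟨O, hO, rfl⟩ := isOpen_induced_iff.mp ((hU n).1 S hS)
      exact ⟨O, ⟨hO, hS⟩, hxS⟩⟩
  refine ⟨fun n => preimage (↑) '' V n, fun n => ⟨?_, ?_, ?_⟩, ?_⟩
  · rintro _ ⟨T, hT, rfl⟩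
    exact ((hV n).1 T hT).preimage continuous_subtype_val
  · rintro _ ⟨T, hT, rfl⟩ _ ⟨T', hT', rfl⟩ hne
    exact ((hV n).2.1 hT hT' fun h => hne (h ▸ rfl)).preimage _
  · rintro _ ⟨T, hT, rfl⟩
    obtain ⟨O, ⟨-, hOU⟩, hTO⟩ := (hV n).2.2 T hT
    exact ⟨_, hOU, preimage_mono hTO⟩
  · refine eq_univ_of_forall fun ⟨x, hx⟩ => ?_
    obtain ⟨T, hTV, hxT⟩ := hVcov hx
    obtain ⟨n, hTn⟩ := mem_iUnion.mp hTV
    exact ⟨_, mem_iUnion.mpr ⟨n, T, hTn, rfl⟩, hxT⟩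

end

/-- Property `S_c(O,O)` is inherited by `F_σ` subsets. -/
theorem scOO_of_Fsigma {X : Type*} [TopologicalSpace X] (hX : ScOO X) (F : Set X)
    (hF : ∃ C : ℕ → Set X, (∀ n, IsClosed (C n)) ∧ F = ⋃ n, C n) :
    ScOO ↥F := by
  obtain ⟨C, hC, rfl⟩ := hF
  exact (scOOOn_iUnion fun k => hX.scOOOn_of_isClosed (hC k)).scOO
end

section
/- The space of irrational numbers, i.e., ℝ\ℚ with the subspace topology inherited from ℝ, does not have the Hurewicz property. -/
/-! Enumerate the rationals as `c n` and let `U n` consist of the complements in `ℝ \ ℚ` of the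
closed balls around `c n`. A finite part of `U n` only covers the complement of some ball
`ball (c n) (ε n)`, and `⋂ K, ⋃ n ≥ K, ball (c n) (ε n)` is a dense `Gδ` containing all but
finitely many rationals. By Baire it meets the irrationals, and a point of the intersection lies
outside `⋃₀ V n` for infinitely many `n`. -/

open Set Filter Metric Topology

section

variable {Y : Type*} [MetricSpace Y]

def farFromCover (s : Set Y) (c : Y) : Set (Set s) :=
  {A | ∃ δ > 0, A = {x : s | δ < dist (x : Y) c}}

theorem isOpen_of_mem_farFromCover {s : Set Y} {c : Y} {A : Set s}
    (hA : A ∈ farFromCover s c) : IsOpen A := by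
  obtain ⟨δ, -, rfl⟩ := hA
  exact isOpen_lt continuous_const (continuous_subtype_val.dist continuous_const)

theorem sUnion_farFromCover {s : Set Y} {c : Y} (hc : c ∉ s) :
    ⋃₀ farFromCover s c = univ := by
  refine eq_univ_of_forall fun x => ?_
  have hpos : 0 < dist (x : Y) c := dist_pos.2 fun h => hc (h ▸ x.2)
  exact ⟨_, ⟨dist (x : Y) c / 2, half_pos hpos, rfl⟩, half_lt_self hpos⟩

theorem exists_sUnion_subset_of_finite_subset_farFromCover {s : Set Y} {c : Y}
    {V : Set (Set s)} (hV : V.Finite) (hVc : V ⊆ farFromCover s c) :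
    ∃ ε > 0, ⋃₀ V ⊆ {x : s | ε < dist (x : Y) c} := by
  have hsmall : ∀ A ∈ V, ∀ᶠ ε in 𝓝[>] (0 : ℝ), A ⊆ {x : s | ε < dist (x : Y) c} := by
    intro A hA
    obtain ⟨δ, hδ, rfl⟩ := hVc hA
    filter_upwards [Ioo_mem_nhdsGT hδ] with ε hε x hx
    exact hε.2.trans hx
  obtain ⟨ε, hεV, hε⟩ :=
    (((eventually_all_finite hV).2 hsmall).and self_mem_nhdsWithin).exists
  exact ⟨ε, hε, sUnion_subset hεV⟩

variable [BaireSpace Y] [∀ y : Y, (𝓝[≠] y).NeBot]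

theorem dense_iInter_iUnion_ball {c : ℕ → Y} (hc : Dense (range c)) {ε : ℕ → ℝ}
    (hε : ∀ n, 0 < ε n) : Dense (⋂ K, ⋃ n ≥ K, ball (c n) (ε n)) := by
  refine dense_iInter_of_isOpen (fun K => isOpen_biUnion fun n _ => isOpen_ball) fun K => ?_
  refine (hc.sdiff_finite ((finite_Iio K).image c)).mono ?_
  rintro _ ⟨⟨n, rfl⟩, hn⟩
  have hKn : K ≤ n := not_lt.1 fun h => hn (mem_image_of_mem c h)
  exact mem_biUnion hKn (mem_ball_self (hε n))

theorem exists_mem_frequently_dist_lt {s : Set Y} (hs : IsGδ s) (hsd : Dense s) {c : ℕ → Y}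
    (hc : Dense (range c)) {ε : ℕ → ℝ} (hε : ∀ n, 0 < ε n) :
    ∃ x ∈ s, ∃ᶠ n in atTop, dist x (c n) < ε n := by
  have hG : IsGδ (⋂ K, ⋃ n ≥ K, ball (c n) (ε n)) :=
    .iInter fun K => (isOpen_biUnion fun n _ => isOpen_ball).isGδ
  have : Nonempty Y := ⟨c 0⟩
  obtain ⟨x, hxs, hxG⟩ :=
    (Dense.inter_of_Gδ hs hG hsd (dense_iInter_iUnion_ball hc hε)).nonempty
  refine ⟨x, hxs, frequently_atTop.2 fun K => ?_⟩
  simpa only [mem_iUnion₂, mem_ball, exists_prop] using mem_iInter.1 hxG K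

theorem not_hurewiczProperty_of_isGδ_of_disjoint_denseRange {s : Set Y} (hs : IsGδ s)
    (hsd : Dense s) {c : ℕ → Y} (hc : Dense (range c)) (hcs : ∀ n, c n ∉ s) :
    ¬ HurewiczProperty s := by
  intro h
  obtain ⟨V, hV, hVx⟩ := h (fun n => farFromCover s (c n)) fun n =>
    ⟨fun _ => isOpen_of_mem_farFromCover, sUnion_farFromCover (hcs n)⟩
  choose ε hε hVε using fun n =>
    exists_sUnion_subset_of_finite_subset_farFromCover (hV n).1 (hV n).2
  obtain ⟨x, hxs, hx⟩ := exists_mem_frequently_dist_lt hs hsd hc hε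
  obtain ⟨n, hnear, hfar⟩ := (hx.and_eventually (hVx ⟨x, hxs⟩)).exists
  exact (hVε n hfar).not_gt hnear

end

/-- The space of irrational numbers does not have the Hurewicz property. -/
theorem not_hurewicz_irrational :
    ¬ HurewiczProperty ↥{x : ℝ | Irrational x} := by
  set c : ℕ → ℝ := Rat.cast ∘ (Denumerable.eqv ℚ).symm
  have hc : Dense (range c) := by
    rw [(Denumerable.eqv ℚ).symm.surjective.range_comp]
    exact Rat.denseRange_cast
  exact not_hurewiczProperty_of_isGδ_of_disjoint_denseRange .setOfPred_irrational
    dense_irrational hc fun n => Rat.not_irrational _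
end
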